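/- Fix an environment with two facilities at ℓ_1 < ℓ_2, building costs b_1, b_2 > 0, Δ = ℓ_2 − ℓ_1 and M = Δ/2 + b_2/4 − b_1/4, and assume 0 < M < Δ. Let B = max{ (min(b_1, b_2) + Δ)/(b_1 + b_2), (min(b_1, b_2) + Δ + M)/(max(b_1, b_2) + M) }. Then every strategyproof and anonymous two-agent mechanism f has social cost approximation ratio at least B: for every real r < B there exists a profile x ∈ ℝ² with SC(f(x)) > r · OPT(x). -/

import Mathlib

/-- Number of agents assigned to facility `j` under assignment `s`
(two agents, two facilities; facility 1 is index `0`, facility 2 is index `1`). -/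
def facCount (s : Fin 2 → Fin 2) (j : Fin 2) : ℕ :=
  (Finset.univ.filter fun i => s i = j).card

/-- Cost of an agent with true position `y` under assignment `s`, being agent `i`. -/
noncomputable def agentCost (ℓ bc : Fin 2 → ℝ) (y : ℝ)
    (s : Fin 2 → Fin 2) (i : Fin 2) : ℝ :=
  |y - ℓ (s i)| + bc (s i) / (facCount s (s i) : ℝ)

/-- A two-agent mechanism is strategyproof if no agent can decrease her (true)
cost by misreporting her position. -/
def Strategyproof (ℓ bc : Fin 2 → ℝ)
    (f : (Fin 2 → ℝ) → Fin 2 → Fin 2) : Prop :=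
  ∀ (x : Fin 2 → ℝ) (i : Fin 2) (xi' : ℝ),
    agentCost ℓ bc (x i) (f x) i ≤
      agentCost ℓ bc (x i) (f (Function.update x i xi')) i

/-- A two-agent mechanism is anonymous: `f(x₂, x₁) = (f₂(x₁,x₂), f₁(x₁,x₂))`. -/
def Anonymous (f : (Fin 2 → ℝ) → Fin 2 → Fin 2) : Prop :=
  ∀ x₁ x₂ : ℝ,
    f ![x₂, x₁] 0 = f ![x₁, x₂] 1 ∧ f ![x₂, x₁] 1 = f ![x₁, x₂] 0

/-- Social cost of an assignment `s` with respect to the true profile `x`. -/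
noncomputable def socialCost (ℓ bc : Fin 2 → ℝ) (x : Fin 2 → ℝ)
    (s : Fin 2 → Fin 2) : ℝ :=
  ∑ i : Fin 2, agentCost ℓ bc (x i) s i

/-- Optimal (minimum) social cost over all four assignments. -/
noncomputable def OPT (ℓ bc : Fin 2 → ℝ) (x : Fin 2 → ℝ) : ℝ :=
  ⨅ s : Fin 2 → Fin 2, socialCost ℓ bc x s

/-!
Let `p = ℓ 0 + M`. An agent at `x < p` strictly prefers sharing facility `0` to sharing
facility `1`, and an agent at `x > p` the reverse. By anonymity, two agents reporting the same
point share a facility. If two agents at `ℓ j` share the other facility, the profile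
`(ℓ j, ℓ j)` alone has ratio at least `B`. Otherwise, by strategyproofness a single shared
assignment `f (x', ℓ 0) = (1, 1)` spreads to all `x > p`, and `f (x', ℓ 1) = (0, 0)` to all
`x < p`; the profiles `(ℓ 1, ℓ 0)` and `(x, ℓ 0)` with `x ↓ p` (resp. `(ℓ 0, ℓ 1)` and `(x, ℓ 1)`
with `x ↑ p`) then realise the two terms of `B`. If neither shared assignment ever occurs,
strategyproofness forces `f (p - d, p + d) = (0, 0)` and `f (p + d, p - d) = (1, 1)` for small
`d > 0`, contradicting anonymity.
-/

open Filter Topology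

section Costs

variable {ℓ bc : Fin 2 → ℝ}

lemma facCount_apply : ∀ (s : Fin 2 → Fin 2) (i : Fin 2),
    facCount s (s i) = if s 0 = s 1 then 2 else 1 := by
  decide

lemma agentCost_eq (y : ℝ) (s : Fin 2 → Fin 2) (i : Fin 2) :
    agentCost ℓ bc y s i = |y - ℓ (s i)| + bc (s i) / if s 0 = s 1 then 2 else 1 := by
  rw [agentCost, facCount_apply]
  split_ifs <;> norm_num

@[simp]
lemma agentCost_shared (y : ℝ) (j i : Fin 2) :
    agentCost ℓ bc y ![j, j] i = |y - ℓ j| + bc j / 2 := by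
  fin_cases i <;> simp [agentCost_eq]

lemma agentCost_split_fst {j k : Fin 2} (hjk : j ≠ k) (y : ℝ) :
    agentCost ℓ bc y ![j, k] 0 = |y - ℓ j| + bc j := by
  simp [agentCost_eq, hjk]

lemma agentCost_split_snd {j k : Fin 2} (hjk : j ≠ k) (y : ℝ) :
    agentCost ℓ bc y ![j, k] 1 = |y - ℓ k| + bc k := by
  simp [agentCost_eq, hjk]

lemma socialCost_pair (x y : ℝ) (s : Fin 2 → Fin 2) :
    socialCost ℓ bc ![x, y] s = agentCost ℓ bc x s 0 + agentCost ℓ bc y s 1 := by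
  simp [socialCost, Fin.sum_univ_two]

lemma socialCost_shared (x y : ℝ) (j : Fin 2) :
    socialCost ℓ bc ![x, y] ![j, j] = |x - ℓ j| + |y - ℓ j| + bc j := by
  rw [socialCost_pair, agentCost_shared, agentCost_shared]
  ring

lemma socialCost_split {j k : Fin 2} (hjk : j ≠ k) (x y : ℝ) :
    socialCost ℓ bc ![x, y] ![j, k] = |x - ℓ j| + |y - ℓ k| + (bc j + bc k) := by
  rw [socialCost_pair, agentCost_split_fst hjk, agentCost_split_snd hjk]
  ring

lemma agentCost_pos (hb : ∀ j, 0 < bc j) (y : ℝ) (s : Fin 2 → Fin 2) (i : Fin 2) :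
    0 < agentCost ℓ bc y s i := by
  rw [agentCost_eq]
  have := hb (s i)
  split_ifs <;> positivity

lemma socialCost_pos (hb : ∀ j, 0 < bc j) (x : Fin 2 → ℝ) (s : Fin 2 → Fin 2) :
    0 < socialCost ℓ bc x s :=
  Finset.sum_pos (fun i _ => agentCost_pos hb (x i) s i) Finset.univ_nonempty

lemma OPT_le_socialCost (x : Fin 2 → ℝ) (s : Fin 2 → Fin 2) :
    OPT ℓ bc x ≤ socialCost ℓ bc x s :=
  ciInf_le (Set.finite_range _).bddBelow s

lemma OPT_pos (hb : ∀ j, 0 < bc j) (x : Fin 2 → ℝ) : 0 < OPT ℓ bc x := by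
  obtain ⟨s, hs⟩ := exists_eq_ciInf_of_finite (f := socialCost ℓ bc x)
  rw [OPT, ← hs]
  exact socialCost_pos hb x s

end Costs

lemma assignment_cases (s : Fin 2 → Fin 2) :
    s = ![0, 0] ∨ s = ![0, 1] ∨ s = ![1, 0] ∨ s = ![1, 1] := by
  revert s
  decide

section Mechanism

variable {ℓ bc : Fin 2 → ℝ} {f : (Fin 2 → ℝ) → Fin 2 → Fin 2}

lemma Anonymous.swap_shared (han : Anonymous f) {x y : ℝ} {j : Fin 2}
    (h : f ![x, y] = ![j, j]) : f ![y, x] = ![j, j] := by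
  funext i
  fin_cases i
  · simpa [h] using (han x y).1
  · simpa [h] using (han x y).2

lemma Anonymous.diag_cases (han : Anonymous f) (q : ℝ) :
    f ![q, q] = ![0, 0] ∨ f ![q, q] = ![1, 1] := by
  have h := (han q q).1
  rcases assignment_cases (f ![q, q]) with hs | hs | hs | hs <;> simp_all

lemma Strategyproof.fst_le (hsp : Strategyproof ℓ bc f) (x x' y : ℝ) :
    agentCost ℓ bc x (f ![x, y]) 0 ≤ agentCost ℓ bc x (f ![x', y]) 0 := by
  have h := hsp ![x, y] 0 x'
  rwa [Matrix.cons_val_zero, show Function.update ![x, y] 0 x' = ![x', y] from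
    Fin.update_cons_zero _ _ _] at h

lemma Strategyproof.eq_shared_of_alone_lt (hsp : Strategyproof ℓ bc f) (hb : ∀ j, 0 < bc j)
    {j k : Fin 2} (hjk : j ≠ k) {x x' y : ℝ} (hdev : f ![x', y] = ![j, j])
    (hkk : f ![x, y] ≠ ![k, k]) (halone : |x - ℓ j| + bc j / 2 < |x - ℓ k| + bc k) :
    f ![x, y] = ![j, j] := by
  have h := hsp.fst_le x x' y
  rw [hdev, agentCost_shared] at h
  have := hb j
  fin_cases j <;> fin_cases k <;> simp only [ne_eq, not_true_eq_false] at hjk <;>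
    rcases assignment_cases (f ![x, y]) with hs | hs | hs | hs <;>
    simp_all [agentCost_split_fst] <;> linarith

lemma Strategyproof.eq_shared_of_prefers (hsp : Strategyproof ℓ bc f) (hb : ∀ j, 0 < bc j)
    {j k : Fin 2} (hjk : j ≠ k) {x x' y : ℝ} (hdev : f ![x', y] = ![j, j])
    (hpref : |x - ℓ j| + bc j / 2 < |x - ℓ k| + bc k / 2) :
    f ![x, y] = ![j, j] := by
  refine hsp.eq_shared_of_alone_lt hb hjk hdev (fun hkk => ?_) (by linarith [hb k])
  have h := hsp.fst_le x x' y
  rw [hdev, hkk, agentCost_shared, agentCost_shared] at h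
  linarith

end Mechanism

/-- The approximation ratio `sup_x SC(f x) / OPT x` of `f` is at least `R`. -/
def ApproxRatioAtLeast (ℓ bc : Fin 2 → ℝ) (f : (Fin 2 → ℝ) → Fin 2 → Fin 2) (R : ℝ) : Prop :=
  ∀ r < R, ∃ x, r * OPT ℓ bc x < socialCost ℓ bc x (f x)

namespace ApproxRatioAtLeast

variable {ℓ bc : Fin 2 → ℝ} {f : (Fin 2 → ℝ) → Fin 2 → Fin 2} {R R' : ℝ}

lemma mono (h : ApproxRatioAtLeast ℓ bc f R) (hR : R' ≤ R) : ApproxRatioAtLeast ℓ bc f R' :=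
  fun r hr => h r (hr.trans_le hR)

lemma max (h : ApproxRatioAtLeast ℓ bc f R) (h' : ApproxRatioAtLeast ℓ bc f R') :
    ApproxRatioAtLeast ℓ bc f (max R R') := fun r hr =>
  (lt_max_iff.1 hr).elim (h r) (h' r)

lemma of_profile (hb : ∀ j, 0 < bc j) (x : Fin 2 → ℝ) (s : Fin 2 → Fin 2) :
    ApproxRatioAtLeast ℓ bc f (socialCost ℓ bc x (f x) / socialCost ℓ bc x s) := by
  intro r hr
  refine ⟨x, ?_⟩
  rcases le_or_gt r 0 with hr0 | hr0
  · nlinarith [OPT_pos (ℓ := ℓ) hb x, socialCost_pos (ℓ := ℓ) hb x (f x)]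
  · calc r * OPT ℓ bc x ≤ r * socialCost ℓ bc x s :=
          mul_le_mul_of_nonneg_left (OPT_le_socialCost x s) hr0.le
      _ < socialCost ℓ bc x (f x) := (lt_div_iff₀ (socialCost_pos hb x s)).1 hr

lemma of_tendsto {α : Type*} {l : Filter α} [l.NeBot] {g : α → ℝ} (hg : Tendsto g l (𝓝 R))
    (h : ∀ᶠ t in l, ApproxRatioAtLeast ℓ bc f (g t)) : ApproxRatioAtLeast ℓ bc f R := fun r hr =>
  have ⟨_, ht, hrt⟩ := (h.and (hg.eventually (lt_mem_nhds hr))).exists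
  ht r hrt

end ApproxRatioAtLeast

lemma ApproxRatioAtLeast.of_eventually_shared {ℓ bc : Fin 2 → ℝ} {f : (Fin 2 → ℝ) → Fin 2 → Fin 2}
    (hb : ∀ j, 0 < bc j) {j k : Fin 2} {l : Filter ℝ} [l.NeBot] {p : ℝ} (hl : l ≤ 𝓝 p)
    (hf : ∀ᶠ x in l, f ![x, ℓ k] = ![j, j]) :
    ApproxRatioAtLeast ℓ bc f ((|p - ℓ j| + |ℓ k - ℓ j| + bc j) / (|p - ℓ k| + bc k)) := by
  have hden : |p - ℓ k| + bc k ≠ 0 := by linarith [hb k, abs_nonneg (p - ℓ k)]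
  refine of_tendsto (g := fun x => (|x - ℓ j| + |ℓ k - ℓ j| + bc j) / (|x - ℓ k| + bc k))
    (.div ((Continuous.tendsto (by fun_prop) p).mono_left hl)
      ((Continuous.tendsto (by fun_prop) p).mono_left hl) hden)
    (hf.mono fun x hx => ?_)
  simpa [hx, socialCost_shared] using of_profile (ℓ := ℓ) (f := f) hb ![x, ℓ k] ![k, k]

section TwoFacilities

variable {ℓ bc : Fin 2 → ℝ} {f : (Fin 2 → ℝ) → Fin 2 → Fin 2} {M : ℝ}

lemma shared_zero_lt_shared_one (hM : M = (ℓ 1 - ℓ 0) / 2 + bc 1 / 4 - bc 0 / 4) (hM0 : 0 < M)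
    (hMΔ : M < ℓ 1 - ℓ 0) {x : ℝ} (hx : x < ℓ 0 + M) :
    |x - ℓ 0| + bc 0 / 2 < |x - ℓ 1| + bc 1 / 2 := by
  rw [abs_sub_comm x (ℓ 1), abs_of_pos (by linarith : 0 < ℓ 1 - x)]
  have : |x - ℓ 0| < ℓ 1 - x + bc 1 / 2 - bc 0 / 2 :=
    abs_sub_lt_iff.2 ⟨by linarith, by linarith⟩
  linarith

lemma shared_one_lt_shared_zero (hM : M = (ℓ 1 - ℓ 0) / 2 + bc 1 / 4 - bc 0 / 4) (hM0 : 0 < M)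
    (hMΔ : M < ℓ 1 - ℓ 0) {x : ℝ} (hx : ℓ 0 + M < x) :
    |x - ℓ 1| + bc 1 / 2 < |x - ℓ 0| + bc 0 / 2 := by
  rw [abs_of_pos (by linarith : 0 < x - ℓ 0)]
  have : |x - ℓ 1| < x - ℓ 0 + bc 0 / 2 - bc 1 / 2 :=
    abs_sub_lt_iff.2 ⟨by linarith, by linarith⟩
  linarith

noncomputable def ratioLowerBound (ℓ bc : Fin 2 → ℝ) (M : ℝ) : ℝ :=
  max ((min (bc 0) (bc 1) + (ℓ 1 - ℓ 0)) / (bc 0 + bc 1))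
    ((min (bc 0) (bc 1) + (ℓ 1 - ℓ 0) + M) / (max (bc 0) (bc 1) + M))

lemma ApproxRatioAtLeast.of_diag_swapped (hb : ∀ j, 0 < bc j) (hM0 : 0 < M)
    (hMΔ : M < ℓ 1 - ℓ 0) {j k : Fin 2} (hjk : j ≠ k) (hf : f ![ℓ j, ℓ j] = ![k, k]) :
    ApproxRatioAtLeast ℓ bc f (ratioLowerBound ℓ bc M) := by
  have h := of_profile (ℓ := ℓ) (f := f) hb ![ℓ j, ℓ j] ![j, j]
  rw [hf, socialCost_shared, socialCost_shared] at h
  refine h.mono ?_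
  have := min_le_left (bc 0) (bc 1); have := min_le_right (bc 0) (bc 1)
  have := le_max_left (bc 0) (bc 1); have := le_max_right (bc 0) (bc 1)
  have := hb 0; have := hb 1
  fin_cases j <;> fin_cases k <;> simp only [ne_eq, not_true_eq_false] at hjk <;>
    simp only [Fin.zero_eta, Fin.mk_one, sub_self, abs_zero,
      zero_add, abs_sub_comm (ℓ 0) (ℓ 1), abs_of_pos (by linarith : 0 < ℓ 1 - ℓ 0)] <;>
    exact max_le (div_le_div₀ (by linarith) (by linarith) (by assumption) (by linarith))
      (div_le_div₀ (by linarith) (by linarith) (by assumption) (by linarith))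

lemma ApproxRatioAtLeast.of_shared_one (hb : ∀ j, 0 < bc j)
    (hM : M = (ℓ 1 - ℓ 0) / 2 + bc 1 / 4 - bc 0 / 4) (hM0 : 0 < M) (hMΔ : M < ℓ 1 - ℓ 0)
    (hsp : Strategyproof ℓ bc f) {x' : ℝ} (hx' : f ![x', ℓ 0] = ![1, 1]) :
    ApproxRatioAtLeast ℓ bc f (ratioLowerBound ℓ bc M) := by
  have hf : ∀ x ∈ Set.Ioi (ℓ 0 + M), f ![x, ℓ 0] = ![1, 1] := fun x hx =>
    hsp.eq_shared_of_prefers hb (by decide) hx' (shared_one_lt_shared_zero hM hM0 hMΔ hx)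
  have h₁ := of_profile (ℓ := ℓ) (f := f) hb ![ℓ 1, ℓ 0] ![1, 0]
  rw [hf _ (by simp only [Set.mem_Ioi]; linarith), socialCost_shared,
    socialCost_split (by decide)] at h₁
  have h₂ := of_eventually_shared (f := f) (p := ℓ 0 + M) hb nhdsWithin_le_nhds
    (eventually_nhdsWithin_of_forall hf)
  refine (h₁.max h₂).mono (max_le_max ?_ ?_) <;>
    simp only [sub_self, abs_zero, add_sub_cancel_left, abs_of_pos hM0,
      abs_sub_comm (ℓ 0) (ℓ 1), abs_of_pos (by linarith : 0 < ℓ 1 - ℓ 0),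
      abs_of_neg (by linarith : ℓ 0 + M - ℓ 1 < 0)]
  · exact div_le_div₀ (by linarith [hb 1]) (by linarith [min_le_right (bc 0) (bc 1)])
      (by linarith [hb 0, hb 1]) (by linarith)
  · exact div_le_div₀ (by linarith [hb 1])
      (by linarith [min_le_left (bc 0) (bc 1), min_le_right (bc 0) (bc 1)])
      (by linarith [hb 0]) (by linarith [le_max_left (bc 0) (bc 1)])

lemma ApproxRatioAtLeast.of_shared_zero (hb : ∀ j, 0 < bc j)
    (hM : M = (ℓ 1 - ℓ 0) / 2 + bc 1 / 4 - bc 0 / 4) (hM0 : 0 < M) (hMΔ : M < ℓ 1 - ℓ 0)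
    (hsp : Strategyproof ℓ bc f) {x' : ℝ} (hx' : f ![x', ℓ 1] = ![0, 0]) :
    ApproxRatioAtLeast ℓ bc f (ratioLowerBound ℓ bc M) := by
  have hf : ∀ x ∈ Set.Iio (ℓ 0 + M), f ![x, ℓ 1] = ![0, 0] := fun x hx =>
    hsp.eq_shared_of_prefers hb (by decide) hx' (shared_zero_lt_shared_one hM hM0 hMΔ hx)
  have h₁ := of_profile (ℓ := ℓ) (f := f) hb ![ℓ 0, ℓ 1] ![0, 1]
  rw [hf _ (by simp only [Set.mem_Iio]; linarith), socialCost_shared,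
    socialCost_split (by decide)] at h₁
  have h₂ := of_eventually_shared (f := f) (p := ℓ 0 + M) hb nhdsWithin_le_nhds
    (eventually_nhdsWithin_of_forall hf)
  refine (h₁.max h₂).mono (max_le_max ?_ ?_) <;>
    simp only [sub_self, abs_zero, add_sub_cancel_left, abs_of_pos hM0,
      abs_of_pos (by linarith : 0 < ℓ 1 - ℓ 0), abs_of_neg (by linarith : ℓ 0 + M - ℓ 1 < 0)]
  · exact div_le_div₀ (by linarith [hb 0]) (by linarith [min_le_left (bc 0) (bc 1)])
      (by linarith [hb 0, hb 1]) (by linarith)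
  · exact div_le_div₀ (by linarith [hb 0]) (by linarith [min_le_left (bc 0) (bc 1)])
      (by linarith [hb 1]) (by linarith [le_max_left (bc 0) (bc 1), le_max_right (bc 0) (bc 1)])

lemma exists_shared_away_of_diag (hb : ∀ j, 0 < bc j)
    (hM : M = (ℓ 1 - ℓ 0) / 2 + bc 1 / 4 - bc 0 / 4) (hM0 : 0 < M) (hMΔ : M < ℓ 1 - ℓ 0)
    (hsp : Strategyproof ℓ bc f) (han : Anonymous f)
    (h0 : f ![ℓ 0, ℓ 0] = ![0, 0]) (h1 : f ![ℓ 1, ℓ 1] = ![1, 1]) :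
    (∃ x, f ![x, ℓ 0] = ![1, 1]) ∨ ∃ x, f ![x, ℓ 1] = ![0, 0] := by
  by_contra! ⟨hA, hB⟩
  obtain ⟨d, hd, hd'⟩ := exists_between (lt_min (lt_min hM0 (sub_pos.2 hMΔ))
    (lt_min (by linarith [hb 0] : 0 < bc 0 / 4) (by linarith [hb 1] : 0 < bc 1 / 4)))
  simp only [lt_min_iff] at hd'
  -- `d < bc j / 4` keeps being alone at one facility costlier, near `p`, than sharing the other.
  have hx : f ![ℓ 0 + M - d, ℓ 1] = ![1, 1] :=
    hsp.eq_shared_of_alone_lt hb (by decide) h1 (hB _) (by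
      rw [abs_of_neg (by linarith), abs_of_pos (by linarith)]; linarith)
  have hy : f ![ℓ 0 + M + d, ℓ 0] = ![0, 0] :=
    hsp.eq_shared_of_alone_lt hb (by decide) h0 (hA _) (by
      rw [abs_of_pos (by linarith), abs_of_neg (by linarith)]; linarith)
  have h00 : f ![ℓ 0 + M - d, ℓ 0 + M + d] = ![0, 0] :=
    hsp.eq_shared_of_prefers hb (by decide) (han.swap_shared hy)
      (shared_zero_lt_shared_one hM hM0 hMΔ (by linarith))
  have h11 : f ![ℓ 0 + M + d, ℓ 0 + M - d] = ![1, 1] :=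
    hsp.eq_shared_of_prefers hb (by decide) (han.swap_shared hx)
      (shared_one_lt_shared_zero hM hM0 hMΔ (by linarith))
  have h := han.swap_shared h00
  rw [h11] at h
  exact absurd h (by decide)

end TwoFacilities

theorem sp_anonymous_ratio_lower_bound_general (ℓ bc : Fin 2 → ℝ)
    (hb : ∀ j, 0 < bc j)
    (M : ℝ) (hM : M = (ℓ 1 - ℓ 0) / 2 + bc 1 / 4 - bc 0 / 4)
    (hM0 : 0 < M) (hMΔ : M < ℓ 1 - ℓ 0)
    (B : ℝ)
    (hB : B = max ((min (bc 0) (bc 1) + (ℓ 1 - ℓ 0)) / (bc 0 + bc 1))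
              ((min (bc 0) (bc 1) + (ℓ 1 - ℓ 0) + M) / (max (bc 0) (bc 1) + M)))
    (f : (Fin 2 → ℝ) → Fin 2 → Fin 2)
    (hsp : Strategyproof ℓ bc f) (han : Anonymous f) :
    ∀ r : ℝ, r < B →
      ∃ x : Fin 2 → ℝ, r * OPT ℓ bc x < socialCost ℓ bc x (f x) := by
  suffices ApproxRatioAtLeast ℓ bc f (ratioLowerBound ℓ bc M) from hB ▸ this
  rcases han.diag_cases (ℓ 0) with h0 | h0
  · rcases han.diag_cases (ℓ 1) with h1 | h1
    · exact .of_diag_swapped hb hM0 hMΔ (by decide) h1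
    · rcases exists_shared_away_of_diag hb hM hM0 hMΔ hsp han h0 h1 with ⟨x, hx⟩ | ⟨x, hx⟩
      · exact .of_shared_one hb hM hM0 hMΔ hsp hx
      · exact .of_shared_zero hb hM hM0 hMΔ hsp hx
  · exact .of_diag_swapped hb hM0 hMΔ (by decide) h0

/-- Lower bound on the approximation ratio of every strategyproof and
anonymous two-agent mechanism when `0 < M < Δ`. -/
theorem sp_anonymous_ratio_lower_bound (ℓ bc : Fin 2 → ℝ) (hℓ : ℓ 0 < ℓ 1)
    (hb : ∀ j, 0 < bc j)
    (M : ℝ) (hM : M = (ℓ 1 - ℓ 0) / 2 + bc 1 / 4 - bc 0 / 4)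
    (hM0 : 0 < M) (hMΔ : M < ℓ 1 - ℓ 0)
    (B : ℝ)
    (hB : B = max ((min (bc 0) (bc 1) + (ℓ 1 - ℓ 0)) / (bc 0 + bc 1))
              ((min (bc 0) (bc 1) + (ℓ 1 - ℓ 0) + M) / (max (bc 0) (bc 1) + M)))
    (f : (Fin 2 → ℝ) → Fin 2 → Fin 2)
    (hsp : Strategyproof ℓ bc f) (han : Anonymous f) :
    ∀ r : ℝ, r < B →
      ∃ x : Fin 2 → ℝ, r * OPT ℓ bc x < socialCost ℓ bc x (f x) :=
  sp_anonymous_ratio_lower_bound_general ℓ bc hb M hM hM0 hMΔ B hB f hsp han
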